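/- The isoperimetric deficit admits the integral representation I₋₁ = (L² − 4πA)/L² = −(1/L) ∫₀^L κ̃(s) (f(s) · ν(s)) ds = −(1/L) ∫₀^L κ̃(s) ( f(s)·ν(s) − (1/L)∫₀^L f·ν ds ) ds. -/

import Mathlib

/-!
For a unit-speed curve `f″ = κ ν`, hence `(f · f′)′ = |f′|² + f · f″ = 1 + κ (f · ν)`.
Integrating over a period kills the left side, so `∫ κ (f · ν) = −L`; together with
`∫ f · ν = −2A` this gives `∫ κ̃ (f · ν) = −L + 4πA/L`. The rotation number being `1` means
`∫ κ̃ = 0`, so `f · ν` may be shifted by its mean without changing the integral.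
-/

open Real MeasureTheory

noncomputable section

/-- Scalar curvature `κ = f″ · ν` of the arc-length parametrized curve
`f = (f₁, f₂)`, where `ν = (−f₂′, f₁′)` is the inward unit normal. -/
def kappa (f₁ f₂ : ℝ → ℝ) (s : ℝ) : ℝ :=
  deriv (deriv f₁) s * (-(deriv f₂ s)) + deriv (deriv f₂) s * deriv f₁ s

/-- The deviation of curvature `κ̃ = κ − 2π/L`. -/
def kappaDev (L : ℝ) (f₁ f₂ : ℝ → ℝ) (s : ℝ) : ℝ :=
  kappa f₁ f₂ s - 2 * π / L

/-- The scale-invariant quantity `I_ℓ = L^(2ℓ+1) ∫₀^L |κ̃^(ℓ)|² ds`. -/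
def Iq (L : ℝ) (f₁ f₂ : ℝ → ℝ) (ℓ : ℕ) : ℝ :=
  L ^ (2 * ℓ + 1) * ∫ s in (0:ℝ)..L, (deriv^[ℓ] (kappaDev L f₁ f₂) s) ^ 2

/-- The signed area `A = −(1/2) ∫₀^L f · ν ds`. -/
def areaA (L : ℝ) (f₁ f₂ : ℝ → ℝ) : ℝ :=
  -(1/2) * ∫ s in (0:ℝ)..L, (f₁ s * (-(deriv f₂ s)) + f₂ s * deriv f₁ s)

/-- The isoperimetric deficit `I₋₁ = 1 − 4πA/L²`. -/
def Im1 (L : ℝ) (f₁ f₂ : ℝ → ℝ) : ℝ :=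
  1 - 4 * π * areaA L f₁ f₂ / L ^ 2

/-- A smooth closed plane curve of length `L > 0`, parametrized by arc length,
with rotation number `1`, i.e. `(1/(2π)) ∫₀^L κ ds = 1`. -/
def IsClosedCurve (L : ℝ) (f₁ f₂ : ℝ → ℝ) : Prop :=
  0 < L ∧ ContDiff ℝ (⊤ : ℕ∞) f₁ ∧ ContDiff ℝ (⊤ : ℕ∞) f₂ ∧
  Function.Periodic f₁ L ∧ Function.Periodic f₂ L ∧
  (∀ s, (deriv f₁ s) ^ 2 + (deriv f₂ s) ^ 2 = 1) ∧
  (∫ s in (0:ℝ)..L, kappa f₁ f₂ s) = 2 * π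

/-- `f · ν`, the integrand of `areaA`. -/
def dotNormal (f₁ f₂ : ℝ → ℝ) (s : ℝ) : ℝ :=
  f₁ s * (-(deriv f₂ s)) + f₂ s * deriv f₁ s

theorem Function.Periodic.deriv {𝕜 F : Type*} [NontriviallyNormedField 𝕜] [NormedAddCommGroup F]
    [NormedSpace 𝕜 F] {f : 𝕜 → F} {c : 𝕜} (hf : Function.Periodic f c) :
    Function.Periodic (deriv f) c := fun x => by
  rw [← deriv_comp_add_const, show (fun y => f (y + c)) = f from funext hf]

theorem Function.Periodic.integral_deriv_eq_zero {E : Type*} [NormedAddCommGroup E]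
    [NormedSpace ℝ E] [CompleteSpace E] {F F' : ℝ → E} {c : ℝ} (hF : Function.Periodic F c)
    (hderiv : ∀ x, HasDerivAt F (F' x) x) (hint : IntervalIntegrable F' volume 0 c) :
    ∫ x in (0:ℝ)..c, F' x = 0 := by
  rw [intervalIntegral.integral_eq_sub_of_hasDerivAt (fun x _ => hderiv x) hint,
    show F c = F 0 by simpa using hF 0, sub_self]

theorem mul_deriv_add_mul_deriv_eq_zero {u v : ℝ → ℝ} {r s : ℝ} (hu : DifferentiableAt ℝ u s)
    (hv : DifferentiableAt ℝ v s) (hr : ∀ t, u t ^ 2 + v t ^ 2 = r) :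
    u s * deriv u s + v s * deriv v s = 0 := by
  have hsum : HasDerivAt (fun t => u t ^ 2 + v t ^ 2)
      (2 * u s * deriv u s + 2 * v s * deriv v s) s :=
    ((hu.hasDerivAt.pow 2).add (hv.hasDerivAt.pow 2)).congr_deriv (by ring)
  have hconst : HasDerivAt (fun t => u t ^ 2 + v t ^ 2) 0 s := by
    simpa only [hr] using hasDerivAt_const s r
  linarith [hsum.unique hconst]

theorem hasDerivAt_dot_tangent {f₁ f₂ : ℝ → ℝ} (hf₁ : Differentiable ℝ f₁)
    (hf₂ : Differentiable ℝ f₂) (hf₁' : Differentiable ℝ (deriv f₁))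
    (hf₂' : Differentiable ℝ (deriv f₂)) (hunit : ∀ s, deriv f₁ s ^ 2 + deriv f₂ s ^ 2 = 1)
    (s : ℝ) :
    HasDerivAt (fun t => f₁ t * deriv f₁ t + f₂ t * deriv f₂ t)
      (1 + kappa f₁ f₂ s * dotNormal f₁ f₂ s) s := by
  refine (((hf₁ s).hasDerivAt.mul (hf₁' s).hasDerivAt).add
    ((hf₂ s).hasDerivAt.mul (hf₂' s).hasDerivAt)).congr_deriv ?_
  have horth := mul_deriv_add_mul_deriv_eq_zero (hf₁' s) (hf₂' s) hunit
  simp only [kappa, dotNormal]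
  linear_combination (1 - f₁ s * deriv (deriv f₁) s - f₂ s * deriv (deriv f₂) s) * hunit s +
    (f₁ s * deriv f₁ s + f₂ s * deriv f₂ s) * horth

theorem intervalIntegral.integral_mul_sub_const_of_integral_eq_zero {k g : ℝ → ℝ} {a b : ℝ}
    (hk : IntervalIntegrable k volume a b)
    (hkg : IntervalIntegrable (fun x => k x * g x) volume a b)
    (hk0 : ∫ x in a..b, k x = 0) (c : ℝ) :
    ∫ x in a..b, k x * (g x - c) = ∫ x in a..b, k x * g x := by
  simp only [mul_sub]
  rw [intervalIntegral.integral_sub hkg (hk.mul_const c), intervalIntegral.integral_mul_const,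
    hk0, zero_mul, sub_zero]

open scoped ContDiff

namespace IsClosedCurve

variable {L : ℝ} {f₁ f₂ : ℝ → ℝ}

theorem contDiff_fst (h : IsClosedCurve L f₁ f₂) : ContDiff ℝ ∞ f₁ := h.2.1

theorem contDiff_snd (h : IsClosedCurve L f₁ f₂) : ContDiff ℝ ∞ f₂ := h.2.2.1

theorem contDiff_deriv_fst (h : IsClosedCurve L f₁ f₂) : ContDiff ℝ ∞ (deriv f₁) :=
  (contDiff_infty_iff_deriv.mp h.contDiff_fst).2

theorem contDiff_deriv_snd (h : IsClosedCurve L f₁ f₂) : ContDiff ℝ ∞ (deriv f₂) :=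
  (contDiff_infty_iff_deriv.mp h.contDiff_snd).2

theorem continuous_kappa (h : IsClosedCurve L f₁ f₂) : Continuous (kappa f₁ f₂) := by
  have := h.contDiff_deriv_fst.continuous_deriv (by simp)
  have := h.contDiff_deriv_snd.continuous_deriv (by simp)
  have := h.contDiff_deriv_fst.continuous
  have := h.contDiff_deriv_snd.continuous
  unfold kappa
  fun_prop

theorem continuous_dotNormal (h : IsClosedCurve L f₁ f₂) : Continuous (dotNormal f₁ f₂) := by
  have := h.contDiff_fst.continuous
  have := h.contDiff_snd.continuous
  have := h.contDiff_deriv_fst.continuous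
  have := h.contDiff_deriv_snd.continuous
  unfold dotNormal
  fun_prop

theorem continuous_kappaDev (h : IsClosedCurve L f₁ f₂) : Continuous (kappaDev L f₁ f₂) :=
  h.continuous_kappa.sub continuous_const

theorem integral_kappa_mul_dotNormal (h : IsClosedCurve L f₁ f₂) :
    ∫ s in (0:ℝ)..L, kappa f₁ f₂ s * dotNormal f₁ f₂ s = -L := by
  have hκg : Continuous fun s => kappa f₁ f₂ s * dotNormal f₁ f₂ s :=
    h.continuous_kappa.mul h.continuous_dotNormal
  have hf₁' := h.contDiff_deriv_fst.differentiable (by simp)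
  have hf₂' := h.contDiff_deriv_snd.differentiable (by simp)
  obtain ⟨-, hf₁, hf₂, hp₁, hp₂, hunit, -⟩ := h
  have hperiod : Function.Periodic (fun t => f₁ t * deriv f₁ t + f₂ t * deriv f₂ t) L :=
    fun t => by simp only [hp₁ t, hp₂ t, hp₁.deriv t, hp₂.deriv t]
  have hzero := hperiod.integral_deriv_eq_zero
    (hasDerivAt_dot_tangent (hf₁.differentiable (by simp)) (hf₂.differentiable (by simp))
      hf₁' hf₂' hunit)
    ((continuous_const.add hκg).intervalIntegrable 0 L)
  rw [intervalIntegral.integral_add intervalIntegrable_const (hκg.intervalIntegrable 0 L),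
    intervalIntegral.integral_const, smul_eq_mul, mul_one, sub_zero] at hzero
  linarith

theorem integral_kappaDev (h : IsClosedCurve L f₁ f₂) :
    ∫ s in (0:ℝ)..L, kappaDev L f₁ f₂ s = 0 := by
  have hκ : IntervalIntegrable (kappa f₁ f₂) volume 0 L :=
    h.continuous_kappa.intervalIntegrable 0 L
  obtain ⟨hL, -, -, -, -, -, hrot⟩ := h
  simp only [kappaDev]
  rw [intervalIntegral.integral_sub hκ intervalIntegrable_const, hrot,
    intervalIntegral.integral_const, smul_eq_mul]
  field_simp [hL.ne']
  ring

theorem Im1_eq_neg_inv_mul_integral_kappaDev_mul_dotNormal (h : IsClosedCurve L f₁ f₂) :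
    Im1 L f₁ f₂ = -(1 / L) * ∫ s in (0:ℝ)..L, kappaDev L f₁ f₂ s * dotNormal f₁ f₂ s := by
  have hsplit : ∫ s in (0:ℝ)..L, kappaDev L f₁ f₂ s * dotNormal f₁ f₂ s =
      (∫ s in (0:ℝ)..L, kappa f₁ f₂ s * dotNormal f₁ f₂ s) -
        2 * π / L * ∫ s in (0:ℝ)..L, dotNormal f₁ f₂ s := by
    simp only [kappaDev, sub_mul]
    rw [intervalIntegral.integral_sub ?_ ?_, intervalIntegral.integral_const_mul]
    · exact (h.continuous_kappa.mul h.continuous_dotNormal).intervalIntegrable 0 L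
    · exact (continuous_const.mul h.continuous_dotNormal).intervalIntegrable 0 L
  have harea : ∫ s in (0:ℝ)..L, dotNormal f₁ f₂ s = -2 * areaA L f₁ f₂ := by
    simp only [areaA, dotNormal]
    ring
  rw [hsplit, h.integral_kappa_mul_dotNormal, harea, Im1]
  field_simp [h.1.ne']
  ring

end IsClosedCurve

/-- Integral representation of the isoperimetric deficit:
`I₋₁ = (L² − 4πA)/L² = −(1/L) ∫₀^L κ̃ (f·ν) ds
     = −(1/L) ∫₀^L κ̃ (f·ν − (1/L)∫₀^L f·ν ds) ds`. -/
theorem stmt_3 (L : ℝ) (f₁ f₂ : ℝ → ℝ) (h : IsClosedCurve L f₁ f₂) :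
    Im1 L f₁ f₂ = (L ^ 2 - 4 * π * areaA L f₁ f₂) / L ^ 2 ∧
    Im1 L f₁ f₂ =
      -(1 / L) * ∫ s in (0:ℝ)..L,
        kappaDev L f₁ f₂ s * (f₁ s * (-(deriv f₂ s)) + f₂ s * deriv f₁ s) ∧
    Im1 L f₁ f₂ =
      -(1 / L) * ∫ s in (0:ℝ)..L,
        kappaDev L f₁ f₂ s *
          ((f₁ s * (-(deriv f₂ s)) + f₂ s * deriv f₁ s) -
            (1 / L) * ∫ u in (0:ℝ)..L, (f₁ u * (-(deriv f₂ u)) + f₂ u * deriv f₁ u)) := by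
  have hdeficit := h.Im1_eq_neg_inv_mul_integral_kappaDev_mul_dotNormal
  refine ⟨by rw [Im1]; field_simp [h.1.ne'], hdeficit, ?_⟩
  change _ = -(1 / L) * ∫ s in (0:ℝ)..L, kappaDev L f₁ f₂ s *
    (dotNormal f₁ f₂ s - 1 / L * ∫ u in (0:ℝ)..L, dotNormal f₁ f₂ u)
  rw [intervalIntegral.integral_mul_sub_const_of_integral_eq_zero
    (h.continuous_kappaDev.intervalIntegrable 0 L)
    ((h.continuous_kappaDev.mul h.continuous_dotNormal).intervalIntegrable 0 L)
    h.integral_kappaDev]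
  exact hdeficit
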